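/- arXiv:2507.15086 — 4 statements merged into one kernel-verified Lean document; each statement's English description precedes it below -/
import Mathlib

section
/- In the tight bonded braid monoid BB_n (n ≥ 3), for every 2 ≤ i ≤ n−1, the elementary bond b_i satisfies b_i = (σ_i σ_{i−1})⁻¹ (σ_{i−1} σ_{i−2})⁻¹ ⋯ (σ_2 σ_1)⁻¹ b_1 (σ_2 σ_1) (σ_3 σ_2) ⋯ (σ_i σ_{i−1}), where (σ_k σ_{k−1})⁻¹ denotes the word σ_{k−1}⁻ σ_k⁻. (Claim proved in Section 6.3: every elementary bond is a conjugate of b_1 by an explicit braid word.) -/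
/-- Generators of the tight bonded braid monoid `BB n`: index `i : Fin (n-1)` (0-based)
corresponds to the generator with 1-based label `i+1`. -/
inductive BBGen (n : ℕ) : Type
  | sigma    : Fin (n - 1) → BBGen n
  | sigmaInv : Fin (n - 1) → BBGen n
  | bond     : Fin (n - 1) → BBGen n

open FreeMonoid in
/-- The defining relations of the tight bonded braid monoid. -/
inductive BBRel (n : ℕ) : FreeMonoid (BBGen n) → FreeMonoid (BBGen n) → Prop
  | inv_right (i : Fin (n-1)) :
      BBRel n (of (.sigma i) * of (.sigmaInv i)) 1
  | inv_left (i : Fin (n-1)) :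
      BBRel n (of (.sigmaInv i) * of (.sigma i)) 1
  | sigma_comm (i j : Fin (n-1)) (h : 1 < Nat.dist i.val j.val) :
      BBRel n (of (.sigma i) * of (.sigma j)) (of (.sigma j) * of (.sigma i))
  | braid (i j : Fin (n-1)) (h : j.val = i.val + 1) :
      BBRel n (of (.sigma i) * of (.sigma j) * of (.sigma i))
              (of (.sigma j) * of (.sigma i) * of (.sigma j))
  | bond_comm (i j : Fin (n-1)) (h : 1 < Nat.dist i.val j.val) :
      BBRel n (of (.bond i) * of (.bond j)) (of (.bond j) * of (.bond i))
  | bond_sigma_far (i j : Fin (n-1)) (h : 1 < Nat.dist i.val j.val) :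
      BBRel n (of (.bond i) * of (.sigma j)) (of (.sigma j) * of (.bond i))
  | bond_sigmaInv_far (i j : Fin (n-1)) (h : 1 < Nat.dist i.val j.val) :
      BBRel n (of (.bond i) * of (.sigmaInv j)) (of (.sigmaInv j) * of (.bond i))
  | bond_sigma_self (i : Fin (n-1)) :
      BBRel n (of (.bond i) * of (.sigma i)) (of (.sigma i) * of (.bond i))
  | bond_sigmaInv_self (i : Fin (n-1)) :
      BBRel n (of (.bond i) * of (.sigmaInv i)) (of (.sigmaInv i) * of (.bond i))
  | bond_slide (i j : Fin (n-1)) (h : j.val = i.val + 1) :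
      BBRel n (of (.bond i) * of (.sigma j) * of (.sigma i))
              (of (.sigma j) * of (.sigma i) * of (.bond j))
  | bond_slide' (i j : Fin (n-1)) (h : j.val = i.val + 1) :
      BBRel n (of (.sigma i) * of (.sigma j) * of (.bond i))
              (of (.bond j) * of (.sigma i) * of (.sigma j))

/-- The tight bonded braid monoid on `n` strands. -/
def BB (n : ℕ) : Type := PresentedMonoid (BBRel n)

instance (n : ℕ) : Monoid (BB n) := inferInstanceAs (Monoid (PresentedMonoid (BBRel n)))

namespace BB
/-- The braid generator `σ_{i+1}` of `BB n`. -/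
def sigma {n : ℕ} (i : Fin (n-1)) : BB n := PresentedMonoid.of (BBRel n) (.sigma i)
/-- The formal inverse `σ_{i+1}⁻` of `BB n`. -/
def sigmaInv {n : ℕ} (i : Fin (n-1)) : BB n := PresentedMonoid.of (BBRel n) (.sigmaInv i)
/-- The elementary bond `b_{i+1}` of `BB n`. -/
def bond {n : ℕ} (i : Fin (n-1)) : BB n := PresentedMonoid.of (BBRel n) (.bond i)
end BB

namespace BB

/-- `σ` with a (0-based) natural-number index; junk value `1` out of range. -/
def sig (n k : ℕ) : BB n := if h : k < n - 1 then sigma ⟨k, h⟩ else 1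

/-- `σ⁻` with a (0-based) natural-number index; junk value `1` out of range. -/
def sigInv (n k : ℕ) : BB n := if h : k < n - 1 then sigmaInv ⟨k, h⟩ else 1

/-- elementary bond with a (0-based) natural-number index; junk value `1` out of range. -/
def bnd (n k : ℕ) : BB n := if h : k < n - 1 then bond ⟨k, h⟩ else 1

/-- `leftW n m = (σ_{m+1} σ_m)⁻¹ ⋯ (σ₂ σ₁)⁻¹` (1-based labels), where `(σ_k σ_{k-1})⁻¹`
denotes the word `σ_{k-1}⁻ σ_k⁻`. -/
def leftW (n : ℕ) : ℕ → BB n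
  | 0     => 1
  | m + 1 => (sigInv n m * sigInv n (m+1)) * leftW n m

/-- `rightW n m = (σ₂ σ₁)(σ₃ σ₂) ⋯ (σ_{m+1} σ_m)` (1-based labels). -/
def rightW (n : ℕ) : ℕ → BB n
  | 0     => 1
  | m + 1 => rightW n m * (sig n (m+1) * sig n m)

end BB

/-!
Sliding `b_i` through `σ_{i+1} σ_i` turns it into `b_{i+1}`, and `σ_i⁻ σ_{i+1}⁻` is a left
inverse of `σ_{i+1} σ_i`; so `b_{i+1} = σ_i⁻ σ_{i+1}⁻ b_i σ_{i+1} σ_i`, and the theorem follows by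
induction on `i`.
-/

theorem eq_mul_mul_of_mul_eq_one_of_mul_eq_mul {M : Type*} [Monoid M] {u w b c : M}
    (huw : u * w = 1) (h : b * w = w * c) : c = u * b * w := by
  rw [mul_assoc, h, ← mul_assoc, huw, one_mul]

namespace BB

variable {n : ℕ}

theorem sigmaInv_mul_sigma (i : Fin (n-1)) : sigmaInv i * sigma i = 1 :=
  PresentedMonoid.mk_eq_mk_of_rel (BBRel.inv_left i)

theorem bond_mul_sigma_mul_sigma (i j : Fin (n-1)) (h : j.val = i.val + 1) :
    bond i * (sigma j * sigma i) = sigma j * sigma i * bond j := by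
  rw [← mul_assoc]
  exact PresentedMonoid.mk_eq_mk_of_rel (BBRel.bond_slide i j h)

theorem bond_eq_conj_bond_of_val_eq_succ (i j : Fin (n-1)) (h : j.val = i.val + 1) :
    bond j = sigmaInv i * sigmaInv j * bond i * (sigma j * sigma i) := by
  refine eq_mul_mul_of_mul_eq_one_of_mul_eq_mul ?_ (bond_mul_sigma_mul_sigma i j h)
  rw [mul_assoc, ← mul_assoc (sigmaInv j), sigmaInv_mul_sigma, one_mul, sigmaInv_mul_sigma]

theorem bnd_succ (m : ℕ) (h : m + 1 < n - 1) :
    bnd n (m + 1) = sigInv n m * sigInv n (m + 1) * bnd n m * (sig n (m + 1) * sig n m) := by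
  have hm : m < n - 1 := Nat.lt_of_succ_lt h
  simp only [bnd, sig, sigInv, dif_pos h, dif_pos hm]
  exact bond_eq_conj_bond_of_val_eq_succ ⟨m, hm⟩ ⟨m + 1, h⟩ rfl

theorem bnd_eq_leftW_mul_bnd_zero_mul_rightW (m : ℕ) (h : m < n - 1) :
    bnd n m = leftW n m * bnd n 0 * rightW n m := by
  induction m with
  | zero => rw [leftW, rightW, one_mul, mul_one]
  | succ k ih =>
    rw [bnd_succ k h, ih (Nat.lt_of_succ_lt h), leftW, rightW]
    simp only [mul_assoc]

theorem bnd_val (i : Fin (n-1)) : bnd n i.val = bond i :=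
  dif_pos i.isLt

end BB

theorem bond_eq_conjugate_of_b1_general (n : ℕ) (i : Fin (n-1)) :
    BB.bond i = BB.leftW n i.val * BB.bnd n 0 * BB.rightW n i.val := by
  rw [← BB.bnd_val, BB.bnd_eq_leftW_mul_bnd_zero_mul_rightW i.val i.isLt]

/-- **Section 6.3.**  In the tight bonded braid monoid `BB n` (`n ≥ 3`), every elementary bond
`b_i` with `2 ≤ i ≤ n-1` (1-based label `i = i₀+1`, i.e. `1 ≤ i₀`) satisfies
`b_i = (σ_i σ_{i-1})⁻¹ (σ_{i-1} σ_{i-2})⁻¹ ⋯ (σ₂ σ₁)⁻¹ b_1 (σ₂ σ₁)(σ₃ σ₂) ⋯ (σ_i σ_{i-1})`,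
where `(σ_k σ_{k-1})⁻¹` denotes the word `σ_{k-1}⁻ σ_k⁻`. -/
theorem bond_eq_conjugate_of_b1 (n : ℕ) (hn : 3 ≤ n) (i : Fin (n-1)) (hi : 1 ≤ i.val) :
    BB.bond i = BB.leftW n i.val * BB.bnd n 0 * BB.rightW n i.val :=
  bond_eq_conjugate_of_b1_general n i
end

section
/- In the tight bonded braid monoid BB_n (n ≥ 3), the relation b_1 (σ_2 σ_1)(σ_1 σ_2) = (σ_2 σ_1)(σ_1 σ_2) b_1 holds. (Claim proved in Section 6.3, obtained by substituting the two expressions b_2 = (σ_2 σ_1)⁻¹ b_1 (σ_2 σ_1) and b_2 = (σ_1 σ_2) b_1 (σ_1 σ_2)⁻¹ into one another.) -/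

theorem bb_sound {n : ℕ} {a b : FreeMonoid (BBGen n)} (h : BBRel n a b) :
    (PresentedMonoid.mk (BBRel n) a : BB n) = PresentedMonoid.mk (BBRel n) b :=
  Quotient.sound (ConGen.Rel.of _ _ h)

theorem bb_slide {n : ℕ} (i j : Fin (n-1)) (h : j.val = i.val + 1) :
    BB.bond i * BB.sigma j * BB.sigma i = BB.sigma j * BB.sigma i * BB.bond j := by
  have := bb_sound (BBRel.bond_slide i j h)
  simp [BB.bond, BB.sigma, PresentedMonoid.of, map_mul] at this ⊢
  exact this

theorem bb_slide' {n : ℕ} (i j : Fin (n-1)) (h : j.val = i.val + 1) :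
    BB.sigma i * BB.sigma j * BB.bond i = BB.bond j * BB.sigma i * BB.sigma j := by
  have := bb_sound (BBRel.bond_slide' i j h)
  simp [BB.bond, BB.sigma, PresentedMonoid.of, map_mul] at this ⊢
  exact this

/-- **Section 6.3.**  In the tight bonded braid monoid `BB n` (`n ≥ 3`) the relation
`b_1 (σ₂ σ₁)(σ₁ σ₂) = (σ₂ σ₁)(σ₁ σ₂) b_1` holds (here `σ₁ = BB.sig n 0`,
`σ₂ = BB.sig n 1` and `b_1 = BB.bnd n 0` in 0-based indexing). -/
theorem b1_commutes_with_sq (n : ℕ) (hn : 3 ≤ n) :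
    BB.bnd n 0 * ((BB.sig n 1 * BB.sig n 0) * (BB.sig n 0 * BB.sig n 1)) =
      ((BB.sig n 1 * BB.sig n 0) * (BB.sig n 0 * BB.sig n 1)) * BB.bnd n 0 := by
  have h0 : (0:ℕ) < n - 1 := by omega
  have h1 : (1:ℕ) < n - 1 := by omega
  simp only [BB.sig, BB.bnd, dif_pos h0, dif_pos h1]
  have hA := bb_slide (⟨0,h0⟩ : Fin (n-1)) ⟨1,h1⟩ rfl
  have hB := bb_slide' (⟨0,h0⟩ : Fin (n-1)) ⟨1,h1⟩ rfl
  calc BB.bond ⟨0,h0⟩ * ((BB.sigma ⟨1,h1⟩ * BB.sigma ⟨0,h0⟩) * (BB.sigma ⟨0,h0⟩ * BB.sigma ⟨1,h1⟩))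
      = (BB.bond ⟨0,h0⟩ * BB.sigma ⟨1,h1⟩ * BB.sigma ⟨0,h0⟩) * BB.sigma ⟨0,h0⟩ * BB.sigma ⟨1,h1⟩ := by
        simp [mul_assoc]
    _ = (BB.sigma ⟨1,h1⟩ * BB.sigma ⟨0,h0⟩ * BB.bond ⟨1,h1⟩) * BB.sigma ⟨0,h0⟩ * BB.sigma ⟨1,h1⟩ := by
        rw [hA]
    _ = BB.sigma ⟨1,h1⟩ * BB.sigma ⟨0,h0⟩ * (BB.bond ⟨1,h1⟩ * BB.sigma ⟨0,h0⟩ * BB.sigma ⟨1,h1⟩) := by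
        simp [mul_assoc]
    _ = BB.sigma ⟨1,h1⟩ * BB.sigma ⟨0,h0⟩ * (BB.sigma ⟨0,h0⟩ * BB.sigma ⟨1,h1⟩ * BB.bond ⟨0,h0⟩) := by
        rw [← hB]
    _ = ((BB.sigma ⟨1,h1⟩ * BB.sigma ⟨0,h0⟩) * (BB.sigma ⟨0,h0⟩ * BB.sigma ⟨1,h1⟩)) * BB.bond ⟨0,h0⟩ := by
        simp [mul_assoc]
end

section
/- For every integer n ≥ 2, the monoid homomorphism ι : B_n → BB_n from the Artin braid group to the tight bonded braid monoid determined by ι(s_i) = σ_i (and hence ι(s_i⁻¹) = σ_i⁻) for all 1 ≤ i ≤ n−1 is well defined and injective. (Claim of Remark 6.8: the classical braid group B_n injects into the tight bonded braid monoid BB_n.) -/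
/-- Relators of the Artin braid group `B n` on generators `s_1, …, s_{n-1}` (0-based
indexing by `Fin (n-1)`): `s_i s_j = s_j s_i` for `|i-j| > 1` and
`s_i s_{i+1} s_i = s_{i+1} s_i s_{i+1}`. -/
def braidRels (n : ℕ) : Set (FreeGroup (Fin (n-1))) :=
  { r | (∃ i j : Fin (n-1), 1 < Nat.dist i.val j.val ∧
          r = FreeGroup.of i * FreeGroup.of j * (FreeGroup.of j * FreeGroup.of i)⁻¹) ∨
        (∃ i j : Fin (n-1), j.val = i.val + 1 ∧
          r = FreeGroup.of i * FreeGroup.of j * FreeGroup.of i *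
              (FreeGroup.of j * FreeGroup.of i * FreeGroup.of j)⁻¹) }

/-- The Artin braid group on `n` strands, as a presented group. -/
def BraidGroup (n : ℕ) : Type := PresentedGroup (braidRels n)

instance (n : ℕ) : Group (BraidGroup n) := inferInstanceAs (Group (PresentedGroup (braidRels n)))

/-- The generator `s_{i+1}` of the braid group `B n`. -/
def BraidGroup.s {n : ℕ} (i : Fin (n-1)) : BraidGroup n :=
  (PresentedGroup.of i : PresentedGroup (braidRels n))

namespace BBProof

variable {n : ℕ}

theorem BB.rel_eq {a b : FreeMonoid (BBGen n)} (h : BBRel n a b) :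
    PresentedMonoid.mk (BBRel n) a = PresentedMonoid.mk (BBRel n) b :=
  Quotient.sound (ConGen.Rel.of a b h)

theorem BB.sigma_mul_sigmaInv (i : Fin (n-1)) : BB.sigma i * BB.sigmaInv i = 1 :=
  BB.rel_eq (BBRel.inv_right i)

theorem BB.sigmaInv_mul_sigma (i : Fin (n-1)) : BB.sigmaInv i * BB.sigma i = 1 :=
  BB.rel_eq (BBRel.inv_left i)

/-- `σ_i` as a unit of `BB n`. -/
def sigmaUnit (i : Fin (n-1)) : (BB n)ˣ :=
  ⟨BB.sigma i, BB.sigmaInv i, BB.sigma_mul_sigmaInv i, BB.sigmaInv_mul_sigma i⟩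

theorem sigma_comm (i j : Fin (n-1)) (h : 1 < Nat.dist i.val j.val) :
    BB.sigma i * BB.sigma j = BB.sigma j * BB.sigma i :=
  BB.rel_eq (BBRel.sigma_comm i j h)

theorem sigma_braid (i j : Fin (n-1)) (h : j.val = i.val + 1) :
    BB.sigma i * BB.sigma j * BB.sigma i = BB.sigma j * BB.sigma i * BB.sigma j :=
  BB.rel_eq (BBRel.braid i j h)

theorem rels_hold : ∀ r ∈ braidRels n,
    FreeGroup.lift (fun i => (sigmaUnit i : (BB n)ˣ)) r = 1 := by
  rintro r (⟨i, j, h, rfl⟩ | ⟨i, j, h, rfl⟩) <;>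
    simp only [map_mul, map_inv, FreeGroup.lift_apply_of, mul_inv_eq_one] <;>
    ext <;> simp only [Units.val_mul, sigmaUnit]
  · exact sigma_comm i j h
  · exact sigma_braid i j h

/-- The injection `ι : B n → BB n`. -/
def iota : BraidGroup n →* BB n :=
  (Units.coeHom (BB n)).comp (PresentedGroup.toGroup (rels_hold (n := n)))

theorem toGroup_s (i : Fin (n-1)) :
    PresentedGroup.toGroup (rels_hold (n := n)) (BraidGroup.s i) = sigmaUnit i :=
  PresentedGroup.toGroup.of (rels_hold (n := n))

theorem iota_s (i : Fin (n-1)) : iota (BraidGroup.s i) = BB.sigma i :=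
  congrArg Units.val (toGroup_s i)

theorem iota_s_inv (i : Fin (n-1)) : iota (BraidGroup.s i)⁻¹ = BB.sigmaInv i := by
  have : PresentedGroup.toGroup (rels_hold (n := n)) (BraidGroup.s i)⁻¹
      = (sigmaUnit i)⁻¹ := by rw [← toGroup_s]; exact map_inv _ _
  exact congrArg Units.val this

/-- The image of a `BB`-generator in the braid group (bonds go to `1`). -/
def piGen : BBGen n → BraidGroup n
  | .sigma i => BraidGroup.s i
  | .sigmaInv i => (BraidGroup.s i)⁻¹
  | .bond _ => 1

theorem braid_relator_one {r : FreeGroup (Fin (n-1))} (hr : r ∈ braidRels n) :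
    (QuotientGroup.mk r : PresentedGroup (braidRels n)) = 1 :=
  (QuotientGroup.eq_one_iff r).mpr (Subgroup.subset_normalClosure hr)

theorem s_comm (i j : Fin (n-1)) (h : 1 < Nat.dist i.val j.val) :
    BraidGroup.s i * BraidGroup.s j = BraidGroup.s j * BraidGroup.s i := by
  have := braid_relator_one (n := n) (r := FreeGroup.of i * FreeGroup.of j *
    (FreeGroup.of j * FreeGroup.of i)⁻¹) (Or.inl ⟨i, j, h, rfl⟩)
  rw [← mul_inv_eq_one]
  exact this

theorem s_braid (i j : Fin (n-1)) (h : j.val = i.val + 1) :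
    BraidGroup.s i * BraidGroup.s j * BraidGroup.s i =
      BraidGroup.s j * BraidGroup.s i * BraidGroup.s j := by
  have := braid_relator_one (n := n) (r := FreeGroup.of i * FreeGroup.of j * FreeGroup.of i *
    (FreeGroup.of j * FreeGroup.of i * FreeGroup.of j)⁻¹) (Or.inr ⟨i, j, h, rfl⟩)
  rw [← mul_inv_eq_one]
  exact this

theorem piGen_rels : ∀ a b : FreeMonoid (BBGen n), BBRel n a b →
    FreeMonoid.lift (piGen (n := n)) a = FreeMonoid.lift (piGen (n := n)) b := by
  intro a b h
  induction h <;>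
    simp only [map_mul, map_one, FreeMonoid.lift_eval_of, piGen, one_mul, mul_one,
      mul_inv_cancel, inv_mul_cancel]
  · exact s_comm _ _ ‹_›
  · exact s_braid _ _ ‹_›

/-- The retraction `π : BB n → B n`. -/
def pi : BB n →* BraidGroup n := PresentedMonoid.lift (piGen (n := n)) piGen_rels

theorem pi_iota (x : BraidGroup n) : pi (iota x) = x := by
  have : (pi (n := n)).comp iota = MonoidHom.id _ := by
    apply PresentedGroup.ext
    intro i
    show pi (iota (BraidGroup.s i)) = BraidGroup.s i
    rw [iota_s]
    rfl
  exact DFunLike.congr_fun this x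

end BBProof


/-- **Remark 6.8.**  For every `n ≥ 2` the monoid homomorphism `ι : B n → BB n` from the Artin
braid group to the tight bonded braid monoid determined by `ι(s_i) = σ_i` (and hence
`ι(s_i⁻¹) = σ_i⁻`) is well defined and injective: the classical braid group injects into the
tight bonded braid monoid. -/
theorem braid_group_injects_into_BB (n : ℕ) (hn : 2 ≤ n) :
    ∃ ι : BraidGroup n →* BB n,
      Function.Injective ι ∧
      (∀ i : Fin (n-1), ι (BraidGroup.s i) = BB.sigma i) ∧
      (∀ i : Fin (n-1), ι (BraidGroup.s i)⁻¹ = BB.sigmaInv i) := by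
  refine ⟨BBProof.iota, ?_, BBProof.iota_s, BBProof.iota_s_inv⟩
  intro a b hab
  have := congrArg BBProof.pi hab
  rwa [BBProof.pi_iota, BBProof.pi_iota] at this
end

section
/- For every integer n ≥ 2, the canonical monoid homomorphism j : BB_n → EB_n from the tight bonded braid monoid to the enhanced bonded braid group, determined on generators by j(σ_i) = σ_i, j(σ_i⁻) = σ_i⁻¹ and j(b_i) = b_i for all 1 ≤ i ≤ n−1, is well defined and injective. In particular, the bonded braid monoid embeds into a group. (Theorem 9.3.) -/
/-- Generators of the enhanced bonded braid group `EB n`. -/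
inductive EBGen (n : ℕ) : Type
  | sigma : Fin (n - 1) → EBGen n
  | bond  : Fin (n - 1) → EBGen n

namespace EBGen
/-- The letter `σ_{i+1}` in the free group. -/
def S {n : ℕ} (i : Fin (n-1)) : FreeGroup (EBGen n) := FreeGroup.of (EBGen.sigma i)
/-- The letter `b_{i+1}` in the free group. -/
def Bd {n : ℕ} (i : Fin (n-1)) : FreeGroup (EBGen n) := FreeGroup.of (EBGen.bond i)
end EBGen

open EBGen in
/-- Relators of the enhanced bonded braid group `EB n`. -/
def ebRels (n : ℕ) : Set (FreeGroup (EBGen n)) :=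
  { r |
    (∃ i j : Fin (n-1), 1 < Nat.dist i.val j.val ∧
        r = S i * S j * (S j * S i)⁻¹) ∨
    (∃ i j : Fin (n-1), j.val = i.val + 1 ∧
        r = S i * S j * S i * (S j * S i * S j)⁻¹) ∨
    (∃ i j : Fin (n-1), 1 < Nat.dist i.val j.val ∧
        r = Bd i * Bd j * (Bd j * Bd i)⁻¹) ∨
    (∃ i j : Fin (n-1), 1 < Nat.dist i.val j.val ∧
        r = Bd i * S j * (S j * Bd i)⁻¹) ∨
    (∃ i : Fin (n-1),
        r = Bd i * S i * (S i * Bd i)⁻¹) ∨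
    (∃ i j : Fin (n-1), j.val = i.val + 1 ∧
        r = Bd i * S j * S i * (S j * S i * Bd j)⁻¹) ∨
    (∃ i j : Fin (n-1), j.val = i.val + 1 ∧
        r = S i * S j * Bd i * (Bd j * S i * S j)⁻¹) }

/-- The enhanced bonded braid group on `n` strands. -/
def EB (n : ℕ) : Type := PresentedGroup (ebRels n)

instance (n : ℕ) : Group (EB n) := inferInstanceAs (Group (PresentedGroup (ebRels n)))

/-- The braid generator `σ_{i+1}` of `EB n`. -/
def EB.sigma {n : ℕ} (i : Fin (n-1)) : EB n :=
  (PresentedGroup.of (EBGen.sigma i) : PresentedGroup (ebRels n))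

/-- The (attracting) bond generator `b_{i+1}` of `EB n`. -/
def EB.bond {n : ℕ} (i : Fin (n-1)) : EB n :=
  (PresentedGroup.of (EBGen.bond i) : PresentedGroup (ebRels n))

namespace BBEmb

variable {n : ℕ}

/-- Braid relators. -/
def braidRels (n : ℕ) : Set (FreeGroup (Fin (n-1))) :=
  { r | (∃ i j : Fin (n-1), 1 < Nat.dist i.val j.val ∧
          r = FreeGroup.of i * FreeGroup.of j * (FreeGroup.of j * FreeGroup.of i)⁻¹) ∨
        (∃ i j : Fin (n-1), j.val = i.val + 1 ∧
          r = FreeGroup.of i * FreeGroup.of j * FreeGroup.of i *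
              (FreeGroup.of j * FreeGroup.of i * FreeGroup.of j)⁻¹) }

/-- The braid group on `n` strands. -/
def B (n : ℕ) : Type := PresentedGroup (braidRels n)

instance : Group (B n) := inferInstanceAs (Group (PresentedGroup (braidRels n)))

/-- Braid generator. -/
def s (i : Fin (n-1)) : B n := PresentedGroup.of i

theorem presented_rel {α : Type*} {rels : Set (FreeGroup α)} {r : FreeGroup α} (h : r ∈ rels) :
    (QuotientGroup.mk r : PresentedGroup rels) = 1 := by
  rw [← QuotientGroup.mk_one, QuotientGroup.eq]
  simpa using Subgroup.subset_normalClosure (by simpa using h)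

theorem s_comm {i j : Fin (n-1)} (h : 1 < Nat.dist i.val j.val) :
    (s i : B n) * s j = s j * s i := by
  have := presented_rel (rels := braidRels n)
    (r := FreeGroup.of i * FreeGroup.of j * (FreeGroup.of j * FreeGroup.of i)⁻¹)
    (Or.inl ⟨i, j, h, rfl⟩)
  have h2 : (s i : B n) * s j * (s j * s i)⁻¹ = 1 := by
    exact this
  exact mul_inv_eq_one.mp h2

theorem s_braid {i j : Fin (n-1)} (h : j.val = i.val + 1) :
    (s i : B n) * s j * s i = s j * s i * s j := by
  have := presented_rel (rels := braidRels n)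
    (r := FreeGroup.of i * FreeGroup.of j * FreeGroup.of i *
          (FreeGroup.of j * FreeGroup.of i * FreeGroup.of j)⁻¹)
    (Or.inr ⟨i, j, h, rfl⟩)
  have h2 : (s i : B n) * s j * s i * (s j * s i * s j)⁻¹ = 1 := by
    exact this
  exact mul_inv_eq_one.mp h2

/-- One-step relation on labelled bonds. -/
inductive XRel (n : ℕ) : B n × Fin (n-1) → B n × Fin (n-1) → Prop
  | self (w : B n) (i : Fin (n-1)) : XRel n (w * s i, i) (w, i)
  | far (w : B n) (i j : Fin (n-1)) (h : 1 < Nat.dist i.val j.val) : XRel n (w * s j, i) (w, i)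
  | slideA (w : B n) (i j : Fin (n-1)) (h : j.val = i.val + 1) :
      XRel n (w * s j * s i, j) (w, i)
  | slideB (w : B n) (i j : Fin (n-1)) (h : j.val = i.val + 1) :
      XRel n (w * s i * s j, i) (w, j)

/-- The set of generalized bonds. -/
def X (n : ℕ) : Type := Quot (XRel n)

/-- Class of a labelled bond. -/
def mkX (p : B n × Fin (n-1)) : X n := Quot.mk _ p

theorem XRel.smul {g : B n} {p q : B n × Fin (n-1)} (h : XRel n p q) :
    XRel n (g * p.1, p.2) (g * q.1, q.2) := by
  cases h with
  | self w i => simpa [← mul_assoc] using XRel.self (g * w) i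
  | far w i j hij => simpa [← mul_assoc] using XRel.far (g * w) i j hij
  | slideA w i j hij => simpa [← mul_assoc] using XRel.slideA (g * w) i j hij
  | slideB w i j hij => simpa [← mul_assoc] using XRel.slideB (g * w) i j hij

instance : SMul (B n) (X n) where
  smul g := Quot.map (fun p => (g * p.1, p.2)) (fun _ _ h => h.smul)

theorem smul_mkX (g : B n) (p : B n × Fin (n-1)) : g • mkX p = mkX (g * p.1, p.2) := rfl

instance : MulAction (B n) (X n) where
  one_smul x := by
    induction x using Quot.ind with
    | _ p => show mkX _ = mkX _; simp [mkX]; rfl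
  mul_smul g h x := by
    induction x using Quot.ind with
    | _ p => show mkX _ = mkX _; simp [mkX, mul_assoc]; rfl

/-- The basic bond. -/
def bX (i : Fin (n-1)) : X n := mkX (1, i)

theorem mkX_eq_smul (w : B n) (i : Fin (n-1)) : mkX (w, i) = w • bX i := by
  simp [bX, smul_mkX]

theorem X_self (w : B n) (i : Fin (n-1)) : mkX (w * s i, i) = mkX (w, i) :=
  Quot.sound (XRel.self w i)

theorem X_far (w : B n) {i j : Fin (n-1)} (h : 1 < Nat.dist i.val j.val) :
    mkX (w * s j, i) = mkX (w, i) :=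
  Quot.sound (XRel.far w i j h)

theorem X_slideA (w : B n) {i j : Fin (n-1)} (h : j.val = i.val + 1) :
    mkX (w * s j * s i, j) = mkX (w, i) :=
  Quot.sound (XRel.slideA w i j h)

theorem X_slideB (w : B n) {i j : Fin (n-1)} (h : j.val = i.val + 1) :
    mkX (w * s i * s j, i) = mkX (w, j) :=
  Quot.sound (XRel.slideB w i j h)

/-- Key identities in smul form. -/
theorem smul_bX_self (i : Fin (n-1)) : s i • bX i = (bX i : X n) := by
  rw [← mkX_eq_smul]; simpa [bX] using X_self 1 i

theorem smul_bX_far {i j : Fin (n-1)} (h : 1 < Nat.dist i.val j.val) :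
    s j • bX i = (bX i : X n) := by
  rw [← mkX_eq_smul]; simpa [bX] using X_far 1 h

theorem smul_bX_slideA {i j : Fin (n-1)} (h : j.val = i.val + 1) :
    (s j * s i) • bX j = (bX i : X n) := by
  rw [← mkX_eq_smul]; simpa [bX, mul_assoc] using X_slideA 1 h

theorem smul_bX_slideB {i j : Fin (n-1)} (h : j.val = i.val + 1) :
    (s i * s j) • bX i = (bX j : X n) := by
  rw [← mkX_eq_smul]; simpa [bX, mul_assoc] using X_slideB 1 h

/-- Commutation graph on bonds. -/
def E (n : ℕ) : X n → X n → Prop := fun x y =>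
  ∃ (g : B n) (i j : Fin (n-1)), 1 < Nat.dist i.val j.val ∧ x = g • bX i ∧ y = g • bX j

theorem E.symm {x y : X n} (h : E n x y) : E n y x := by
  obtain ⟨g, i, j, hij, hx, hy⟩ := h
  exact ⟨g, j, i, by rwa [Nat.dist_comm], hy, hx⟩

theorem E.smul {x y : X n} (g : B n) (h : E n x y) : E n (g • x) (g • y) := by
  obtain ⟨g', i, j, hij, hx, hy⟩ := h
  exact ⟨g * g', i, j, hij, by rw [hx, mul_smul], by rw [hy, mul_smul]⟩

theorem E.of_smul {x y : X n} {g : B n} (h : E n (g • x) (g • y)) : E n x y := by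
  have := h.smul g⁻¹
  simpa using this

end BBEmb

namespace BBEmb

variable {n : ℕ}

/-- Commutation relations for the bond monoid. -/
inductive MRel (n : ℕ) : FreeMonoid (X n) → FreeMonoid (X n) → Prop
  | comm {x y : X n} (h : E n x y) :
      MRel n (FreeMonoid.of x * FreeMonoid.of y) (FreeMonoid.of y * FreeMonoid.of x)

/-- The bond (trace) monoid. -/
def M (n : ℕ) : Type := PresentedMonoid (MRel n)

instance : Monoid (M n) := inferInstanceAs (Monoid (PresentedMonoid (MRel n)))

/-- Generator of `M`. -/
def ofM (x : X n) : M n := PresentedMonoid.of (MRel n) x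

theorem presentedMonoid_sound {α : Type*} {rels : FreeMonoid α → FreeMonoid α → Prop}
    {a b : FreeMonoid α} (h : rels a b) :
    PresentedMonoid.mk rels a = PresentedMonoid.mk rels b :=
  Quotient.sound (ConGen.Rel.of a b h)

theorem M_comm {x y : X n} (h : E n x y) : ofM x * ofM y = ofM y * ofM x :=
  presentedMonoid_sound (MRel.comm h)

/-- Action of the braid group on `M` as a monoid hom. -/
def homM (g : B n) : M n →* M n :=
  PresentedMonoid.lift (fun x => ofM (g • x)) (by
    intro a b h
    cases h with
    | comm hE =>
      simp only [map_mul, FreeMonoid.lift_eval_of]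
      exact M_comm (hE.smul g))

@[simp] theorem homM_ofM (g : B n) (x : X n) : homM g (ofM x) = ofM (g • x) := rfl

theorem hom_ext_M {Mo : Type*} [Monoid Mo] {φ ψ : M n →* Mo}
    (h : ∀ x : X n, φ (ofM x) = ψ (ofM x)) : φ = ψ :=
  PresentedMonoid.ext (MRel n) h

theorem homM_homM (g h : B n) (m : M n) : homM g (homM h m) = homM (g * h) m := by
  have : (homM g).comp (homM h) = homM (g * h) :=
    hom_ext_M (fun x => by simp [mul_smul])
  exact DFunLike.congr_fun this m

@[simp] theorem homM_one (m : M n) : homM (1 : B n) m = m := by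
  have : homM (1 : B n) = MonoidHom.id (M n) :=
    hom_ext_M (fun x => by simp)
  simp [this]

/-- The big group `W`. -/
def W (n : ℕ) : Type := (X n × X n) → FreeGroup (X n)

instance : Group (W n) := inferInstanceAs (Group ((X n × X n) → FreeGroup (X n)))

/-- Permutation of `X` induced by a braid. -/
def permX (g : B n) : X n ≃ X n := MulAction.toPerm g

@[simp] theorem permX_apply (g : B n) (x : X n) : permX g x = g • x := rfl

theorem permX_mul (g h : B n) : permX (g * h) = (permX h).trans (permX g) := by
  ext x
  simp [mul_smul]

theorem permX_one : permX (1 : B n) = Equiv.refl _ := by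
  ext x; simp

theorem permX_inv (g : B n) : permX (g⁻¹ : B n) = (permX g).symm := Equiv.ext fun _ => rfl

/-- Braid action on `W`. -/
def autW' (g : B n) : W n ≃* W n where
  toFun f := fun p => FreeGroup.freeGroupCongr (permX g) (f (g⁻¹ • p.1, g⁻¹ • p.2))
  invFun f := fun p => FreeGroup.freeGroupCongr (permX g⁻¹) (f (g • p.1, g • p.2))
  left_inv f := by
    funext p
    show FreeGroup.freeGroupCongr (permX g⁻¹)
      ((FreeGroup.freeGroupCongr (permX g)) (f (g⁻¹ • (g • p.1), g⁻¹ • (g • p.2)))) = f p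
    rw [inv_smul_smul, inv_smul_smul, permX_inv, ← FreeGroup.freeGroupCongr_symm,
      MulEquiv.symm_apply_apply]
  right_inv f := by
    funext p
    show FreeGroup.freeGroupCongr (permX g)
      ((FreeGroup.freeGroupCongr (permX g⁻¹)) (f (g • (g⁻¹ • p.1), g • (g⁻¹ • p.2)))) = f p
    rw [smul_inv_smul, smul_inv_smul, permX_inv, ← FreeGroup.freeGroupCongr_symm,
      MulEquiv.apply_symm_apply]
  map_mul' f f' := by
    funext p
    exact map_mul (FreeGroup.freeGroupCongr (permX g)) _ _

theorem autW'_apply (g : B n) (f : W n) (p : X n × X n) :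
    autW' g f p = FreeGroup.freeGroupCongr (permX g) (f (g⁻¹ • p.1, g⁻¹ • p.2)) := rfl

/-- Braid action on `W` as a hom to `MulAut`. -/
def actW : B n →* MulAut (W n) where
  toFun := autW'
  map_one' := by
    apply MulEquiv.ext
    intro f
    funext p
    simp [autW'_apply, permX_one]
  map_mul' g h := by
    apply MulEquiv.ext
    intro f
    funext p
    simp only [autW'_apply, MulAut.mul_apply]
    rw [permX_mul, ← FreeGroup.freeGroupCongr_trans]
    simp [mul_smul]

theorem actW_apply (g : B n) (f : W n) (p : X n × X n) :
    actW g f p = FreeGroup.freeGroupCongr (permX g) (f (g⁻¹ • p.1, g⁻¹ • p.2)) := rfl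

/-- The pairs of bonds we track. -/
def Dp (n : ℕ) (p : X n × X n) : Prop := p.1 = p.2 ∨ ¬ E n p.1 p.2

theorem Dp_smul {g : B n} {p : X n × X n} (h : Dp n p) : Dp n (g • p.1, g • p.2) := by
  rcases h with h | h
  · exact Or.inl (by rw [h])
  · exact Or.inr (fun hE => h hE.of_smul)

theorem Dp_smul_iff {g : B n} {p : X n × X n} : Dp n (g • p.1, g • p.2) ↔ Dp n p := by
  constructor
  · intro h
    have := Dp_smul (g := g⁻¹) h
    simpa using this
  · exact Dp_smul

open scoped Classical in
/-- The image of a bond in `W`. -/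
noncomputable def β (x : X n) : W n := fun p =>
  if Dp n p ∧ (x = p.1 ∨ x = p.2) then FreeGroup.of x else 1

open scoped Classical in
theorem β_apply (x : X n) (p : X n × X n) :
    β x p = if Dp n p ∧ (x = p.1 ∨ x = p.2) then FreeGroup.of x else 1 := by
  simp [β]

theorem β_equivariant (g : B n) (x : X n) : actW g (β x) = β (g • x) := by
  classical
  funext p
  rw [actW_apply, β_apply, β_apply]
  have h1 : Dp n (g⁻¹ • p.1, g⁻¹ • p.2) ↔ Dp n p := by
    constructor
    · intro h
      have := Dp_smul (g := g) h
      simpa using this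
    · intro h
      exact Dp_smul h
  have h2 : (x = g⁻¹ • p.1 ∨ x = g⁻¹ • p.2) ↔ (g • x = p.1 ∨ g • x = p.2) := by
    rw [eq_comm (a := x), eq_comm (a := x), inv_smul_eq_iff, inv_smul_eq_iff,
      eq_comm (a := g • x) (b := p.1), eq_comm (a := g • x) (b := p.2)]
  by_cases h : Dp n p ∧ (g • x = p.1 ∨ g • x = p.2)
  · rw [if_pos h, if_pos ⟨h1.mpr h.1, h2.mpr h.2⟩]
    simp
  · rw [if_neg h, if_neg (fun hc => h ⟨h1.mp hc.1, h2.mp hc.2⟩)]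
    simp

/-- Commutation of `β` values for commuting bonds. -/
theorem β_comm {x y : X n} (hE : E n x y) : β x * β y = β y * β x := by
  classical
  funext p
  show β x p * β y p = β y p * β x p
  simp only [β_apply]
  by_cases hx : Dp n p ∧ (x = p.1 ∨ x = p.2)
  · by_cases hy : Dp n p ∧ (y = p.1 ∨ y = p.2)
    · have hxy : x = y := by
        rcases hx.1 with hd | hd
        · have hx' : x = p.1 := by
            rcases hx.2 with h | h
            · exact h
            · exact h.trans hd.symm
          have hy' : y = p.1 := by
            rcases hy.2 with h | h
            · exact h
            · exact h.trans hd.symm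
          rw [hx', hy']
        · -- ¬ E p.1 p.2
          by_contra hne
          rcases hx.2 with h1 | h1 <;> rcases hy.2 with h2 | h2
          · exact hne (h1.trans h2.symm)
          · exact hd (by rw [← h1, ← h2]; exact hE)
          · exact hd (by rw [← h2, ← h1]; exact hE.symm)
          · exact hne (h1.trans h2.symm)
      rw [if_pos hx, if_pos hy, hxy]
    · rw [if_pos hx, if_neg hy, mul_one, one_mul]
  · rw [if_neg hx, mul_one, one_mul]

end BBEmb

namespace BBEmb

variable {n : ℕ}

theorem bb_rel {a b : FreeMonoid (BBGen n)} (h : BBRel n a b) :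
    PresentedMonoid.mk (BBRel n) a = PresentedMonoid.mk (BBRel n) b :=
  presentedMonoid_sound h

theorem hom_ext_BB {Mo : Type*} [Monoid Mo] {φ ψ : BB n →* Mo}
    (h : ∀ g : BBGen n, φ (PresentedMonoid.of (BBRel n) g) = ψ (PresentedMonoid.of (BBRel n) g)) :
    φ = ψ :=
  PresentedMonoid.ext (BBRel n) h

namespace BBfacts

open BB

theorem sigma_inv (i : Fin (n-1)) : (sigma i : BB n) * sigmaInv i = 1 :=
  bb_rel (BBRel.inv_right i)

theorem inv_sigma (i : Fin (n-1)) : (sigmaInv i : BB n) * sigma i = 1 :=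
  bb_rel (BBRel.inv_left i)

theorem sigma_comm {i j : Fin (n-1)} (h : 1 < Nat.dist i.val j.val) :
    (sigma i : BB n) * sigma j = sigma j * sigma i :=
  bb_rel (BBRel.sigma_comm i j h)

theorem braid {i j : Fin (n-1)} (h : j.val = i.val + 1) :
    (sigma i : BB n) * sigma j * sigma i = sigma j * sigma i * sigma j :=
  bb_rel (BBRel.braid i j h)

theorem bond_comm {i j : Fin (n-1)} (h : 1 < Nat.dist i.val j.val) :
    (bond i : BB n) * bond j = bond j * bond i :=
  bb_rel (BBRel.bond_comm i j h)

theorem bond_sigma_far {i j : Fin (n-1)} (h : 1 < Nat.dist i.val j.val) :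
    (bond i : BB n) * sigma j = sigma j * bond i :=
  bb_rel (BBRel.bond_sigma_far i j h)

theorem bond_sigma_self (i : Fin (n-1)) :
    (bond i : BB n) * sigma i = sigma i * bond i :=
  bb_rel (BBRel.bond_sigma_self i)

theorem bond_slide {i j : Fin (n-1)} (h : j.val = i.val + 1) :
    (bond i : BB n) * sigma j * sigma i = sigma j * sigma i * bond j :=
  bb_rel (BBRel.bond_slide i j h)

theorem bond_slide' {i j : Fin (n-1)} (h : j.val = i.val + 1) :
    (sigma i : BB n) * sigma j * bond i = bond j * sigma i * sigma j :=
  bb_rel (BBRel.bond_slide' i j h)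

/-- Conjugation identities, stated right-associated. -/
theorem conj_self (i : Fin (n-1)) :
    (sigma i : BB n) * (bond i * sigmaInv i) = bond i := by
  rw [← mul_assoc, ← bond_sigma_self, mul_assoc, sigma_inv, mul_one]

theorem conj_far {i j : Fin (n-1)} (h : 1 < Nat.dist i.val j.val) :
    (sigma j : BB n) * (bond i * sigmaInv j) = bond i := by
  rw [← mul_assoc, ← bond_sigma_far h, mul_assoc, sigma_inv, mul_one]

theorem conj_slideA {i j : Fin (n-1)} (h : j.val = i.val + 1) :
    (sigma j : BB n) * (sigma i * (bond j * (sigmaInv i * sigmaInv j))) = bond i := by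
  have h1 : (sigma j : BB n) * sigma i * bond j = bond i * sigma j * sigma i :=
    (bond_slide h).symm
  calc (sigma j : BB n) * (sigma i * (bond j * (sigmaInv i * sigmaInv j)))
      = (sigma j * sigma i * bond j) * (sigmaInv i * sigmaInv j) := by
        simp [mul_assoc]
    _ = bond i * sigma j * sigma i * (sigmaInv i * sigmaInv j) := by rw [h1]
    _ = bond i := by
        rw [mul_assoc (bond i * sigma j), ← mul_assoc (sigma i), sigma_inv, one_mul,
          mul_assoc, sigma_inv, mul_one]

theorem conj_slideB {i j : Fin (n-1)} (h : j.val = i.val + 1) :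
    (sigma i : BB n) * (sigma j * (bond i * (sigmaInv j * sigmaInv i))) = bond j := by
  have h1 : (sigma i : BB n) * sigma j * bond i = bond j * sigma i * sigma j :=
    bond_slide' h
  calc (sigma i : BB n) * (sigma j * (bond i * (sigmaInv j * sigmaInv i)))
      = (sigma i * sigma j * bond i) * (sigmaInv j * sigmaInv i) := by
        simp [mul_assoc]
    _ = bond j * sigma i * sigma j * (sigmaInv j * sigmaInv i) := by rw [h1]
    _ = bond j := by
        rw [mul_assoc (bond j * sigma i), ← mul_assoc (sigma j), sigma_inv, one_mul,
          mul_assoc, sigma_inv, mul_one]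

end BBfacts

/-- The braid generators as units of `BB`. -/
def uBB (i : Fin (n-1)) : (BB n)ˣ :=
  ⟨BB.sigma i, BB.sigmaInv i, BBfacts.sigma_inv i, BBfacts.inv_sigma i⟩

/-- The hom from the braid group to the units of `BB`. -/
def U : B n →* (BB n)ˣ :=
  PresentedGroup.toGroup (f := uBB) (by
    rintro r (⟨i, j, hij, rfl⟩ | ⟨i, j, hij, rfl⟩)
    · have : uBB (n := n) i * uBB j = uBB j * uBB i :=
        Units.ext (BBfacts.sigma_comm hij)
      simp only [map_mul, map_inv, FreeGroup.lift_apply_of]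
      rw [this, mul_inv_cancel]
    · have : uBB (n := n) i * uBB j * uBB i = uBB j * uBB i * uBB j :=
        Units.ext (BBfacts.braid hij)
      simp only [map_mul, map_inv, FreeGroup.lift_apply_of]
      rw [this, mul_inv_cancel])

/-- The hom from the braid group to `BB`. -/
def ΞB : B n →* BB n := (Units.coeHom (BB n)).comp U

@[simp] theorem U_s (i : Fin (n-1)) : U (s i : B n) = uBB i :=
  PresentedGroup.toGroup.of _

@[simp] theorem ΞB_s (i : Fin (n-1)) : ΞB (s i : B n) = BB.sigma i := by
  rw [ΞB, MonoidHom.comp_apply, U_s]; rfl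

@[simp] theorem ΞB_s_inv (i : Fin (n-1)) : ΞB ((s i)⁻¹ : B n) = BB.sigmaInv i := by
  rw [ΞB, MonoidHom.comp_apply, map_inv, U_s]; rfl

theorem ΞB_mul_inv (g : B n) : ΞB g * ΞB g⁻¹ = 1 := by
  rw [← map_mul, mul_inv_cancel, map_one]

theorem ΞB_inv_mul (g : B n) : ΞB g⁻¹ * ΞB g = 1 := by
  rw [← map_mul, inv_mul_cancel, map_one]

/-- Image of a generalized bond in `BB`. -/
def cX : X n → BB n :=
  Quot.lift (fun p => ΞB p.1 * (BB.bond p.2 * ΞB p.1⁻¹)) (by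
    intro p q h
    cases h with
    | self w i =>
      simp only [map_mul, mul_inv_rev]
      rw [mul_assoc]
      congr 1
      have hconj : ΞB (s i) * (BB.bond i * ΞB ((s i : B n))⁻¹) = BB.bond i := by
        rw [ΞB_s_inv, ΞB_s]; exact BBfacts.conj_self i
      rw [← mul_assoc (BB.bond i), ← mul_assoc (ΞB (s i)), hconj]
    | far w i j hij =>
      simp only [map_mul, mul_inv_rev]
      rw [mul_assoc]
      congr 1
      have hconj : ΞB (s j) * (BB.bond i * ΞB ((s j : B n))⁻¹) = BB.bond i := by
        rw [ΞB_s_inv, ΞB_s]; exact BBfacts.conj_far hij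
      rw [← mul_assoc (BB.bond i), ← mul_assoc (ΞB (s j)), hconj]
    | slideA w i j hij =>
      simp only [map_mul, mul_inv_rev]
      have : ΞB (s j) * (ΞB (s i) * (BB.bond j * (ΞB (s i)⁻¹ * ΞB (s j)⁻¹))) = BB.bond i := by
        simp only [ΞB_s, ΞB_s_inv]
        exact BBfacts.conj_slideA hij
      calc ΞB w * ΞB (s j) * ΞB (s i) * (BB.bond j * (ΞB (s i)⁻¹ * (ΞB (s j)⁻¹ * ΞB w⁻¹)))
          = ΞB w * (ΞB (s j) * (ΞB (s i) * (BB.bond j * (ΞB (s i)⁻¹ * ΞB (s j)⁻¹))) * ΞB w⁻¹) := by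
            simp [mul_assoc]
        _ = ΞB w * (BB.bond i * ΞB w⁻¹) := by rw [this]
    | slideB w i j hij =>
      simp only [map_mul, mul_inv_rev]
      have : ΞB (s i) * (ΞB (s j) * (BB.bond i * (ΞB (s j)⁻¹ * ΞB (s i)⁻¹))) = BB.bond j := by
        simp only [ΞB_s, ΞB_s_inv]
        exact BBfacts.conj_slideB hij
      calc ΞB w * ΞB (s i) * ΞB (s j) * (BB.bond i * (ΞB (s j)⁻¹ * (ΞB (s i)⁻¹ * ΞB w⁻¹)))
          = ΞB w * (ΞB (s i) * (ΞB (s j) * (BB.bond i * (ΞB (s j)⁻¹ * ΞB (s i)⁻¹))) * ΞB w⁻¹) := by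
            simp [mul_assoc]
        _ = ΞB w * (BB.bond j * ΞB w⁻¹) := by rw [this])

@[simp] theorem cX_mkX (p : B n × Fin (n-1)) :
    cX (mkX p) = ΞB p.1 * (BB.bond p.2 * ΞB p.1⁻¹) := rfl

theorem cX_smul (g : B n) (x : X n) : cX (g • x) = ΞB g * (cX x * ΞB g⁻¹) := by
  induction x using Quot.ind with
  | _ p =>
    show cX (mkX (g * p.1, p.2)) = ΞB g * (cX (mkX p) * ΞB g⁻¹)
    simp only [cX_mkX, map_mul, mul_inv_rev]
    simp [mul_assoc]

@[simp] theorem cX_bX (i : Fin (n-1)) : cX (bX i : X n) = BB.bond i := by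
  show ΞB 1 * (BB.bond i * ΞB (1 : B n)⁻¹) = BB.bond i
  simp

/-- The hom from the bond monoid to `BB`. -/
def ΞM : M n →* BB n :=
  PresentedMonoid.lift cX (by
    intro a b h
    cases h with
    | comm hE =>
      obtain ⟨g, i, j, hij, hx, hy⟩ := hE
      simp only [map_mul, FreeMonoid.lift_eval_of, hx, hy, cX_smul, cX_bX]
      have key : (BB.bond i : BB n) * ΞB g⁻¹ * (ΞB g * (BB.bond j * ΞB g⁻¹)) =
          BB.bond j * ΞB g⁻¹ * (ΞB g * (BB.bond i * ΞB g⁻¹)) := by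
        rw [mul_assoc (BB.bond i), ← mul_assoc (ΞB g⁻¹), ΞB_inv_mul, one_mul,
          mul_assoc (BB.bond j), ← mul_assoc (ΞB g⁻¹), ΞB_inv_mul, one_mul,
          ← mul_assoc, ← mul_assoc, BBfacts.bond_comm hij]
      calc ΞB g * (BB.bond i * ΞB g⁻¹) * (ΞB g * (BB.bond j * ΞB g⁻¹))
          = ΞB g * (BB.bond i * ΞB g⁻¹ * (ΞB g * (BB.bond j * ΞB g⁻¹))) := by
            simp [mul_assoc]
        _ = ΞB g * (BB.bond j * ΞB g⁻¹ * (ΞB g * (BB.bond i * ΞB g⁻¹))) := by rw [key]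
        _ = ΞB g * (BB.bond j * ΞB g⁻¹) * (ΞB g * (BB.bond i * ΞB g⁻¹)) := by
            simp [mul_assoc])

@[simp] theorem ΞM_ofM (x : X n) : ΞM (ofM x) = cX x := rfl

theorem ΞM_homM (g : B n) (m : M n) : ΞM (homM g m) = ΞB g * (ΞM m * ΞB g⁻¹) := by
  have : ΞM.comp (homM g) = ({
      toFun := fun m => ΞB g * (ΞM m * ΞB g⁻¹)
      map_one' := by simpa using ΞB_mul_inv g
      map_mul' := by
        intro a b
        simp only [map_mul, mul_assoc]
        rw [← mul_assoc (ΞB g⁻¹), ΞB_inv_mul, one_mul] } : M n →* BB n) := by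
    apply hom_ext_M
    intro x
    simp [cX_smul]
  exact DFunLike.congr_fun this m

end BBEmb

namespace BBEmb

variable {n : ℕ}

/-! ### The auxiliary monoid `T = M ⋊ B` -/

def T (n : ℕ) : Type := M n × B n

instance : Mul (T n) := ⟨fun a b => (a.1 * homM a.2 b.1, a.2 * b.2)⟩
instance : One (T n) := ⟨(1, 1)⟩

theorem T_mul (a b : T n) : a * b = (a.1 * homM a.2 b.1, a.2 * b.2) := rfl
theorem T_one : (1 : T n) = ((1 : M n), (1 : B n)) := rfl
theorem T_mul_mk (a c : M n) (b d : B n) :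
    @HMul.hMul (T n) (T n) (T n) _ (a, b) (c, d) = (((a * homM b c, b * d)) : T n) := rfl

instance : Monoid (T n) where
  mul_assoc a b c := by
    rw [T_mul, T_mul, T_mul, T_mul]
    refine Prod.ext ?_ ?_
    · show (a.1 * homM a.2 b.1) * homM (a.2 * b.2) c.1 = a.1 * homM a.2 (b.1 * homM b.2 c.1)
      rw [map_mul, ← homM_homM, mul_assoc]
    · exact mul_assoc _ _ _
  one_mul a := by
    rw [T_mul, T_one]
    refine Prod.ext ?_ ?_
    · show 1 * homM 1 a.1 = a.1
      simp
    · exact one_mul _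
  mul_one a := by
    rw [T_mul, T_one]
    refine Prod.ext ?_ ?_
    · show a.1 * homM a.2 1 = a.1
      simp
    · exact mul_one _

theorem fix_inv {g : B n} {x : X n} (h : g • x = x) : g⁻¹ • x = x := by
  conv_lhs => rw [← h]
  exact inv_smul_smul g x

/-- The bond generators of `E` at the basepoint. -/
theorem E_bX {i j : Fin (n-1)} (h : 1 < Nat.dist i.val j.val) : E n (bX i) (bX j) :=
  ⟨1, i, j, h, (one_smul _ _).symm, (one_smul _ _).symm⟩

/-- The map on generators for `Θ`. -/
def fΘ : BBGen n → T n
  | .sigma i => ((1 : M n), s i)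
  | .sigmaInv i => ((1 : M n), (s i)⁻¹)
  | .bond i => (ofM (bX i), (1 : B n))

/-- The structural hom from `BB` to `T`. -/
def Θ : BB n →* T n :=
  PresentedMonoid.lift fΘ (by
    intro a b h
    cases h with
    | inv_right i =>
      simp only [map_mul, FreeMonoid.lift_eval_of, map_one, fΘ]
      refine Prod.ext ?_ ?_ <;> simp [T_mul, T_mul_mk, T_one]
    | inv_left i =>
      simp only [map_mul, FreeMonoid.lift_eval_of, map_one, fΘ]
      refine Prod.ext ?_ ?_ <;> simp [T_mul, T_mul_mk, T_one]
    | sigma_comm i j hij =>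
      simp only [map_mul, FreeMonoid.lift_eval_of, fΘ]
      refine Prod.ext ?_ ?_ <;> simp [T_mul, T_mul_mk, T_one, s_comm hij]
    | braid i j hij =>
      simp only [map_mul, FreeMonoid.lift_eval_of, fΘ]
      refine Prod.ext ?_ ?_ <;> simp [T_mul, T_mul_mk, T_one, s_braid hij]
    | bond_comm i j hij =>
      simp only [map_mul, FreeMonoid.lift_eval_of, fΘ]
      refine Prod.ext ?_ ?_ <;> simp [T_mul, T_mul_mk, T_one, M_comm (E_bX hij)]
    | bond_sigma_far i j hij =>
      simp only [map_mul, FreeMonoid.lift_eval_of, fΘ]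
      refine Prod.ext ?_ ?_ <;> simp [T_mul, T_mul_mk, T_one, smul_bX_far hij]
    | bond_sigmaInv_far i j hij =>
      simp only [map_mul, FreeMonoid.lift_eval_of, fΘ]
      refine Prod.ext ?_ ?_ <;> simp [T_mul, T_mul_mk, T_one, fix_inv (smul_bX_far hij)]
    | bond_sigma_self i =>
      simp only [map_mul, FreeMonoid.lift_eval_of, fΘ]
      refine Prod.ext ?_ ?_ <;> simp [T_mul, T_mul_mk, T_one, smul_bX_self i]
    | bond_sigmaInv_self i =>
      simp only [map_mul, FreeMonoid.lift_eval_of, fΘ]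
      refine Prod.ext ?_ ?_ <;> simp [T_mul, T_mul_mk, T_one, fix_inv (smul_bX_self i)]
    | bond_slide i j hij =>
      simp only [map_mul, FreeMonoid.lift_eval_of, fΘ]
      refine Prod.ext ?_ ?_ <;>
        simp [T_mul, T_mul_mk, T_one, homM_homM, smul_bX_slideA hij]
    | bond_slide' i j hij =>
      simp only [map_mul, FreeMonoid.lift_eval_of, fΘ]
      refine Prod.ext ?_ ?_ <;>
        simp [T_mul, T_mul_mk, T_one, homM_homM, smul_bX_slideB hij])

@[simp] theorem Θ_of (g : BBGen n) : Θ (PresentedMonoid.of (BBRel n) g) = fΘ g := rfl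

/-- The retraction `Ξ : T → BB`. -/
def Ξ : T n →* BB n where
  toFun t := ΞM t.1 * ΞB t.2
  map_one' := by simp [T_one]
  map_mul' a b := by
    simp only [T_mul, map_mul, ΞM_homM, mul_assoc]
    rw [← mul_assoc (ΞB (a.2⁻¹)), ΞB_inv_mul, one_mul]

theorem Ξ_apply (t : T n) : Ξ t = ΞM t.1 * ΞB t.2 := rfl

theorem Ξ_Θ (x : BB n) : Ξ (Θ x) = x := by
  have : Ξ.comp Θ = MonoidHom.id (BB n) := by
    apply hom_ext_BB
    intro g
    cases g with
    | sigma i =>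
      show Ξ (fΘ (.sigma i)) = _
      simp [Ξ_apply, fΘ]
      rfl
    | sigmaInv i =>
      show Ξ (fΘ (.sigmaInv i)) = _
      simp [Ξ_apply, fΘ]
      rfl
    | bond i =>
      show Ξ (fΘ (.bond i)) = _
      simp [Ξ_apply, fΘ]
      rfl
  exact DFunLike.congr_fun this x

/-! ### Relations in `EB` -/

theorem comm_inv {G : Type*} [Group G] {a b : G} (h : a * b = b * a) : a * b⁻¹ = b⁻¹ * a := by
  have := congrArg (fun z => b⁻¹ * z * b⁻¹) h
  simpa [mul_assoc] using this.symm

open EBGen in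
theorem ebs_comm {i j : Fin (n-1)} (h : 1 < Nat.dist i.val j.val) :
    (EB.sigma i : EB n) * EB.sigma j = EB.sigma j * EB.sigma i := by
  have h1 := presented_rel (rels := ebRels n)
    (show (S i * S j * (S j * S i)⁻¹) ∈ ebRels n from Or.inl ⟨i, j, h, rfl⟩)
  have h2 : (EB.sigma i : EB n) * EB.sigma j * (EB.sigma j * EB.sigma i)⁻¹ = 1 := by
    exact h1
  exact mul_inv_eq_one.mp h2

open EBGen in
theorem ebs_braid {i j : Fin (n-1)} (h : j.val = i.val + 1) :
    (EB.sigma i : EB n) * EB.sigma j * EB.sigma i = EB.sigma j * EB.sigma i * EB.sigma j := by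
  have h1 := presented_rel (rels := ebRels n)
    (show (S i * S j * S i * (S j * S i * S j)⁻¹) ∈ ebRels n from Or.inr (Or.inl ⟨i, j, h, rfl⟩))
  have h2 : (EB.sigma i : EB n) * EB.sigma j * EB.sigma i *
      (EB.sigma j * EB.sigma i * EB.sigma j)⁻¹ = 1 := by
    exact h1
  exact mul_inv_eq_one.mp h2

open EBGen in
theorem ebb_comm {i j : Fin (n-1)} (h : 1 < Nat.dist i.val j.val) :
    (EB.bond i : EB n) * EB.bond j = EB.bond j * EB.bond i := by
  have h1 := presented_rel (rels := ebRels n)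
    (show (Bd i * Bd j * (Bd j * Bd i)⁻¹) ∈ ebRels n from Or.inr (Or.inr (Or.inl ⟨i, j, h, rfl⟩)))
  have h2 : (EB.bond i : EB n) * EB.bond j * (EB.bond j * EB.bond i)⁻¹ = 1 := by
    exact h1
  exact mul_inv_eq_one.mp h2

open EBGen in
theorem ebbs_far {i j : Fin (n-1)} (h : 1 < Nat.dist i.val j.val) :
    (EB.bond i : EB n) * EB.sigma j = EB.sigma j * EB.bond i := by
  have h1 := presented_rel (rels := ebRels n)
    (show (Bd i * S j * (S j * Bd i)⁻¹) ∈ ebRels n from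
      Or.inr (Or.inr (Or.inr (Or.inl ⟨i, j, h, rfl⟩))))
  have h2 : (EB.bond i : EB n) * EB.sigma j * (EB.sigma j * EB.bond i)⁻¹ = 1 := by
    exact h1
  exact mul_inv_eq_one.mp h2

open EBGen in
theorem ebbs_self (i : Fin (n-1)) :
    (EB.bond i : EB n) * EB.sigma i = EB.sigma i * EB.bond i := by
  have h1 := presented_rel (rels := ebRels n)
    (show (Bd i * S i * (S i * Bd i)⁻¹) ∈ ebRels n from
      Or.inr (Or.inr (Or.inr (Or.inr (Or.inl ⟨i, rfl⟩)))))
  have h2 : (EB.bond i : EB n) * EB.sigma i * (EB.sigma i * EB.bond i)⁻¹ = 1 := by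
    exact h1
  exact mul_inv_eq_one.mp h2

open EBGen in
theorem eb_slide {i j : Fin (n-1)} (h : j.val = i.val + 1) :
    (EB.bond i : EB n) * EB.sigma j * EB.sigma i = EB.sigma j * EB.sigma i * EB.bond j := by
  have h1 := presented_rel (rels := ebRels n)
    (show (Bd i * S j * S i * (S j * S i * Bd j)⁻¹) ∈ ebRels n from
      Or.inr (Or.inr (Or.inr (Or.inr (Or.inr (Or.inl ⟨i, j, h, rfl⟩))))))
  have h2 : (EB.bond i : EB n) * EB.sigma j * EB.sigma i *
      (EB.sigma j * EB.sigma i * EB.bond j)⁻¹ = 1 := by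
    exact h1
  exact mul_inv_eq_one.mp h2

open EBGen in
theorem eb_slide' {i j : Fin (n-1)} (h : j.val = i.val + 1) :
    (EB.sigma i : EB n) * EB.sigma j * EB.bond i = EB.bond j * EB.sigma i * EB.sigma j := by
  have h1 := presented_rel (rels := ebRels n)
    (show (S i * S j * Bd i * (Bd j * S i * S j)⁻¹) ∈ ebRels n from
      Or.inr (Or.inr (Or.inr (Or.inr (Or.inr (Or.inr ⟨i, j, h, rfl⟩))))))
  have h2 : (EB.sigma i : EB n) * EB.sigma j * EB.bond i *
      (EB.bond j * EB.sigma i * EB.sigma j)⁻¹ = 1 := by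
    exact h1
  exact mul_inv_eq_one.mp h2

/-- The map on generators for `j`. -/
def fj : BBGen n → EB n
  | .sigma i => EB.sigma i
  | .sigmaInv i => (EB.sigma i)⁻¹
  | .bond i => EB.bond i

/-- The canonical hom `j : BB → EB`. -/
def jBB : BB n →* EB n :=
  PresentedMonoid.lift fj (by
    intro a b h
    cases h with
    | inv_right i => simp [map_mul, FreeMonoid.lift_eval_of, fj]
    | inv_left i => simp [map_mul, FreeMonoid.lift_eval_of, fj]
    | sigma_comm i j hij =>
      simp only [map_mul, FreeMonoid.lift_eval_of, fj]
      exact ebs_comm hij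
    | braid i j hij =>
      simp only [map_mul, FreeMonoid.lift_eval_of, fj]
      exact ebs_braid hij
    | bond_comm i j hij =>
      simp only [map_mul, FreeMonoid.lift_eval_of, fj]
      exact ebb_comm hij
    | bond_sigma_far i j hij =>
      simp only [map_mul, FreeMonoid.lift_eval_of, fj]
      exact ebbs_far hij
    | bond_sigmaInv_far i j hij =>
      simp only [map_mul, FreeMonoid.lift_eval_of, fj]
      exact comm_inv (ebbs_far hij)
    | bond_sigma_self i =>
      simp only [map_mul, FreeMonoid.lift_eval_of, fj]
      exact ebbs_self i
    | bond_sigmaInv_self i =>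
      simp only [map_mul, FreeMonoid.lift_eval_of, fj]
      exact comm_inv (ebbs_self i)
    | bond_slide i j hij =>
      simp only [map_mul, FreeMonoid.lift_eval_of, fj]
      exact eb_slide hij
    | bond_slide' i j hij =>
      simp only [map_mul, FreeMonoid.lift_eval_of, fj]
      exact eb_slide' hij)

@[simp] theorem jBB_sigma (i : Fin (n-1)) : jBB (BB.sigma i) = (EB.sigma i : EB n) := rfl
@[simp] theorem jBB_sigmaInv (i : Fin (n-1)) : jBB (BB.sigmaInv i) = (EB.sigma i : EB n)⁻¹ := rfl
@[simp] theorem jBB_bond (i : Fin (n-1)) : jBB (BB.bond i) = (EB.bond i : EB n) := rfl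

/-! ### The hom `ψ : EB → W ⋊ B` -/

open SemidirectProduct

abbrev K (n : ℕ) := SemidirectProduct (W n) (B n) actW

theorem swap_ir (g : B n) (x : W n) :
    (inr g : K n) * inl x = inl (actW g x) * inr g := by
  rw [inl_aut, mul_assoc (inr g * inl x), ← map_mul, inv_mul_cancel, map_one, mul_one]

/-- Generator images for `ψ`. -/
noncomputable def fψ : EBGen n → K n
  | .sigma i => inr (s i)
  | .bond i => inl (β (bX i))

theorem β_fix {g : B n} {x : X n} (h : g • x = x) : actW g (β x) = β x := by
  rw [β_equivariant, h]

/-- The hom `ψ`. -/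
noncomputable def ψ : EB n →* K n :=
  PresentedGroup.toGroup (f := fψ) (by
    rintro r (⟨i, j, hij, rfl⟩ | ⟨i, j, hij, rfl⟩ | ⟨i, j, hij, rfl⟩ | ⟨i, j, hij, rfl⟩ |
      ⟨i, rfl⟩ | ⟨i, j, hij, rfl⟩ | ⟨i, j, hij, rfl⟩)
    · simp only [EBGen.S, map_mul, map_inv, FreeGroup.lift_apply_of, fψ]
      rw [mul_inv_eq_one, ← map_mul, ← map_mul, s_comm hij]
    · simp only [EBGen.S, map_mul, map_inv, FreeGroup.lift_apply_of, fψ]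
      rw [mul_inv_eq_one, ← map_mul, ← map_mul, ← map_mul, ← map_mul, s_braid hij]
    · simp only [EBGen.Bd, map_mul, map_inv, FreeGroup.lift_apply_of, fψ]
      rw [mul_inv_eq_one, ← map_mul, ← map_mul, β_comm (E_bX hij)]
    · simp only [EBGen.Bd, EBGen.S, map_mul, map_inv, FreeGroup.lift_apply_of, fψ]
      rw [mul_inv_eq_one, swap_ir, β_fix (smul_bX_far hij)]
    · simp only [EBGen.Bd, EBGen.S, map_mul, map_inv, FreeGroup.lift_apply_of, fψ]
      rw [mul_inv_eq_one, swap_ir, β_fix (smul_bX_self i)]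
    · simp only [EBGen.Bd, EBGen.S, map_mul, map_inv, FreeGroup.lift_apply_of, fψ]
      rw [mul_inv_eq_one]
      calc inl (β (bX i)) * inr (s j) * inr (s i)
          = inl (β (bX i)) * inr (s j * s i) := by rw [mul_assoc, ← map_mul]
        _ = inl (actW (s j * s i) (β (bX j))) * inr (s j * s i) := by
            rw [β_equivariant, smul_bX_slideA hij]
        _ = inr (s j * s i) * inl (β (bX j)) := (swap_ir _ _).symm
        _ = inr (s j) * inr (s i) * inl (β (bX j)) := by rw [map_mul]
    · simp only [EBGen.Bd, EBGen.S, map_mul, map_inv, FreeGroup.lift_apply_of, fψ]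
      rw [mul_inv_eq_one]
      calc inr (s i) * inr (s j) * inl (β (bX i))
          = inr (s i * s j) * inl (β (bX i)) := by rw [← map_mul]
        _ = inl (actW (s i * s j) (β (bX i))) * inr (s i * s j) := swap_ir _ _
        _ = inl (β (bX j)) * inr (s i * s j) := by
            rw [β_equivariant, smul_bX_slideB hij]
        _ = inl (β (bX j)) * inr (s i) * inr (s j) := by rw [map_mul, mul_assoc])

@[simp] theorem ψ_sigma (i : Fin (n-1)) : ψ (EB.sigma i : EB n) = inr (s i) :=
  PresentedGroup.toGroup.of _

@[simp] theorem ψ_bond (i : Fin (n-1)) : ψ (EB.bond i : EB n) = inl (β (bX i)) :=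
  PresentedGroup.toGroup.of _

/-! ### The hom `η : T → W ⋊ B` and the commuting square -/

/-- The hom from the bond monoid into `W`. -/
noncomputable def iotaM : M n →* W n :=
  PresentedMonoid.lift β (by
    intro a b h
    cases h with
    | comm hE =>
      obtain ⟨g, i, j, hij, hx, hy⟩ := hE
      simp only [map_mul, FreeMonoid.lift_eval_of, hx, hy, ← β_equivariant]
      rw [← map_mul, ← map_mul, β_comm (E_bX hij)])

@[simp] theorem iotaM_ofM (x : X n) : iotaM (ofM x) = β x := rfl

theorem iotaM_homM (g : B n) (m : M n) : iotaM (homM g m) = actW g (iotaM m) := by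
  have : iotaM.comp (homM g) = ((actW g).toMonoidHom.comp iotaM : M n →* W n) := by
    apply hom_ext_M
    intro x
    simp [β_equivariant]
  exact DFunLike.congr_fun this m

/-- The hom `η : T → W ⋊ B`. -/
noncomputable def η : T n →* K n where
  toFun t := inl (iotaM t.1) * inr t.2
  map_one' := by simp [T_one]
  map_mul' a b := by
    simp only [T_mul, map_mul, iotaM_homM]
    calc inl (iotaM a.1) * inl (actW a.2 (iotaM b.1)) * inr (a.2 * b.2)
        = inl (iotaM a.1) * (inl (actW a.2 (iotaM b.1)) * inr a.2) * inr b.2 := by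
          rw [map_mul]; simp [mul_assoc]
      _ = inl (iotaM a.1) * (inr a.2 * inl (iotaM b.1)) * inr b.2 := by rw [← swap_ir]
      _ = inl (iotaM a.1) * inr a.2 * (inl (iotaM b.1) * inr b.2) := by simp [mul_assoc]

theorem η_apply (t : T n) : η t = inl (iotaM t.1) * inr t.2 := rfl
theorem η_mk (a : M n) (b : B n) : η ((a, b) : T n) = inl (iotaM a) * inr b := rfl

theorem η_left (t : T n) : (η t).left = iotaM t.1 := by
  simp [η_apply]

theorem η_right (t : T n) : (η t).right = t.2 := by
  simp [η_apply]

/-- The commuting square. -/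
theorem square : (ψ.comp jBB : BB n →* K n) = η.comp Θ := by
  apply hom_ext_BB
  intro g
  cases g with
  | sigma i =>
    show ψ (jBB (BB.sigma i)) = η (fΘ (.sigma i))
    rw [jBB_sigma, ψ_sigma]
    simp [η_apply, η_mk, fΘ]
  | sigmaInv i =>
    show ψ (jBB (BB.sigmaInv i)) = η (fΘ (.sigmaInv i))
    rw [jBB_sigmaInv, map_inv, ψ_sigma, ← map_inv]
    simp [η_apply, η_mk, fΘ]
  | bond i =>
    show ψ (jBB (BB.bond i)) = η (fΘ (.bond i))
    rw [jBB_bond, ψ_bond]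
    simp [η_apply, η_mk, fΘ]

end BBEmb

namespace BBEmb

variable {n : ℕ}

open scoped Classical in
/-- Boolean "keep" predicate for the projection onto the pair `p`. -/
noncomputable def kp (p : X n × X n) (x : X n) : Bool := decide (x = p.1 ∨ x = p.2)

theorem kp_iff {p : X n × X n} {x : X n} : kp p x = true ↔ (x = p.1 ∨ x = p.2) := by
  simp [kp]

/-- Class of a word in the bond monoid. -/
def mkM (l : List (X n)) : M n := PresentedMonoid.mk (MRel n) (FreeMonoid.ofList l)

theorem mkM_nil : mkM ([] : List (X n)) = 1 := rfl

theorem mkM_cons (x : X n) (l : List (X n)) : mkM (x :: l) = ofM x * mkM l := by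
  rw [mkM, FreeMonoid.ofList_cons, map_mul]
  rfl

theorem mkM_append (l₁ l₂ : List (X n)) : mkM (l₁ ++ l₂) = mkM l₁ * mkM l₂ := by
  rw [mkM, FreeMonoid.ofList_append, map_mul]
  rfl

theorem eq_of_keep {p : X n × X n} {x y : X n} (hp : Dp n p) (hE : E n x y)
    (hx : x = p.1 ∨ x = p.2) (hy : y = p.1 ∨ y = p.2) : x = y := by
  rcases hp with hd | hd
  · have hx' : x = p.1 := by rcases hx with h | h; exacts [h, h.trans hd.symm]
    have hy' : y = p.1 := by rcases hy with h | h; exacts [h, h.trans hd.symm]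
    rw [hx', hy']
  · by_contra hne
    rcases hx with h1 | h1 <;> rcases hy with h2 | h2
    · exact hne (h1.trans h2.symm)
    · exact hd (by rw [← h1, ← h2]; exact hE)
    · exact hd (by rw [← h2, ← h1]; exact hE.symm)
    · exact hne (h1.trans h2.symm)

/-- The projection on letters. -/
noncomputable def fp (p : X n × X n) (x : X n) : FreeMonoid (X n) :=
  if kp p x then FreeMonoid.of x else 1

/-- The projection hom out of `M`, for a tracked pair. -/
noncomputable def φp (p : X n × X n) (hp : Dp n p) : M n →* FreeMonoid (X n) :=
  PresentedMonoid.lift (fp p) (by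
    intro a b h
    cases h with
    | comm hE =>
      rename_i x y
      simp only [map_mul, FreeMonoid.lift_eval_of, fp]
      by_cases hx : kp p x
      · by_cases hy : kp p y
        · have : x = y := eq_of_keep hp hE (kp_iff.mp hx) (kp_iff.mp hy)
          rw [this]
        · rw [if_pos hx, if_neg hy, mul_one, one_mul]
      · rw [if_neg hx, mul_one, one_mul])

theorem φp_mkM (p : X n × X n) (hp : Dp n p) (l : List (X n)) :
    φp p hp (mkM l) = FreeMonoid.ofList (l.filter (kp p)) := by
  induction l with
  | nil => rw [mkM_nil, map_one]; rfl
  | cons x l ih =>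
    rw [mkM_cons, map_mul, ih]
    show fp p x * _ = _
    by_cases hx : kp p x
    · rw [List.filter_cons_of_pos hx, fp, if_pos hx, FreeMonoid.ofList_cons]
    · rw [List.filter_cons_of_neg (by simpa using hx), fp, if_neg hx, one_mul]

theorem first_occ {x : X n} {v : List (X n)} (h : x ∈ v) :
    ∃ v₁ v₂, v = v₁ ++ x :: v₂ ∧ x ∉ v₁ := by
  induction v with
  | nil => simp at h
  | cons y v ih =>
    by_cases hxy : y = x
    · exact ⟨[], v, by rw [hxy]; rfl, by simp⟩
    · have hx : x ∈ v := by
        rcases List.mem_cons.mp h with h | h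
        · exact absurd h.symm hxy
        · exact h
      obtain ⟨v₁, v₂, rfl, hnot⟩ := ih hx
      exact ⟨y :: v₁, v₂, rfl, by
        simp only [List.mem_cons, not_or]
        exact ⟨fun hc => hxy hc.symm, hnot⟩⟩

theorem comm_out {x : X n} {v₁ v₂ : List (X n)} (h : ∀ z ∈ v₁, E n z x) :
    mkM (v₁ ++ x :: v₂) = mkM (x :: (v₁ ++ v₂)) := by
  induction v₁ with
  | nil => rfl
  | cons z v₁ ih =>
    have hz : E n z x := h z (List.mem_cons_self)
    rw [List.cons_append, mkM_cons, ih (fun w hw => h w (List.mem_cons_of_mem _ hw)),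
      mkM_cons, mkM_cons, ← mul_assoc, M_comm hz, mul_assoc, ← mkM_cons, List.cons_append]

/-- **Projection lemma**: a trace is determined by its projections. -/
theorem proj_lemma : ∀ (u v : List (X n)),
    (∀ p, Dp n p → u.filter (kp p) = v.filter (kp p)) → mkM u = mkM v := by
  intro u
  induction u with
  | nil =>
    intro v h
    cases v with
    | nil => rfl
    | cons y v' =>
      exfalso
      have h1 := h (y, y) (Or.inl rfl)
      rw [List.filter_nil, List.filter_cons_of_pos (kp_iff.mpr (Or.inl rfl))] at h1
      exact List.cons_ne_nil _ _ h1.symm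
  | cons x u' ih =>
    intro v h
    have hxv : x ∈ v := by
      have h1 := h (x, x) (Or.inl rfl)
      rw [List.filter_cons_of_pos (kp_iff.mpr (Or.inl rfl))] at h1
      have : x ∈ List.filter (kp (x, x)) v := by
        rw [← h1]; exact List.mem_cons_self
      exact List.mem_of_mem_filter this
    obtain ⟨v₁, v₂, rfl, hxnot⟩ := first_occ hxv
    have hcomm : ∀ z ∈ v₁, E n z x := by
      intro z hz
      by_contra hnE
      have hp : Dp n (z, x) := Or.inr hnE
      have h1 := h (z, x) hp
      rw [List.filter_cons_of_pos (kp_iff.mpr (Or.inr rfl)), List.filter_append,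
        List.filter_cons_of_pos (kp_iff.mpr (Or.inr rfl))] at h1
      have hzf : z ∈ List.filter (kp (z, x)) v₁ :=
        List.mem_filter.mpr ⟨hz, kp_iff.mpr (Or.inl rfl)⟩
      cases hfv : List.filter (kp (z, x)) v₁ with
      | nil => rw [hfv] at hzf; exact List.not_mem_nil hzf
      | cons w ws =>
        rw [hfv] at h1
        have hw : x = w := (List.cons_eq_cons.mp h1).1
        have hwv : w ∈ v₁ :=
          List.mem_of_mem_filter (hfv ▸ (List.mem_cons_self (a := w) (l := ws)))
        exact hxnot (hw ▸ hwv)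
    have hstep : ∀ p, Dp n p → u'.filter (kp p) = (v₁ ++ v₂).filter (kp p) := by
      intro p hp
      have h1 := h p hp
      rw [List.filter_append] at h1
      by_cases hk : kp p x = true
      · rw [List.filter_cons_of_pos hk, List.filter_cons_of_pos hk] at h1
        have hv1 : List.filter (kp p) v₁ = [] := by
          cases hfv : List.filter (kp p) v₁ with
          | nil => rfl
          | cons w ws =>
            exfalso
            rw [hfv] at h1
            have hw : x = w := (List.cons_eq_cons.mp h1).1
            have hwv : w ∈ v₁ :=
              List.mem_of_mem_filter (hfv ▸ (List.mem_cons_self (a := w) (l := ws)))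
            exact hxnot (hw ▸ hwv)
        rw [hv1, List.nil_append] at h1
        rw [List.filter_append, hv1, List.nil_append]
        exact (List.cons_eq_cons.mp h1).2
      · rw [List.filter_cons_of_neg (by simpa using hk),
          List.filter_cons_of_neg (by simpa using hk)] at h1
        rw [List.filter_append]
        exact h1
    calc mkM (x :: u') = ofM x * mkM u' := mkM_cons _ _
      _ = ofM x * mkM (v₁ ++ v₂) := by rw [ih (v₁ ++ v₂) hstep]
      _ = mkM (x :: (v₁ ++ v₂)) := (mkM_cons _ _).symm
      _ = mkM (v₁ ++ x :: v₂) := (comm_out hcomm).symm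

/-! ### The free monoid embeds in the free group -/

/-- Canonical map from the free monoid to the free group. -/
def eFG : FreeMonoid (X n) →* FreeGroup (X n) := FreeMonoid.lift FreeGroup.of

theorem eFG_ofList (l : List (X n)) :
    eFG (FreeMonoid.ofList l) = FreeGroup.mk (l.map (fun x => (x, true))) := by
  induction l with
  | nil =>
    rw [show FreeMonoid.ofList ([] : List (X n)) = 1 from rfl, map_one]
    exact FreeGroup.one_eq_mk
  | cons x l ih =>
    rw [FreeMonoid.ofList_cons, map_mul, ih]
    show FreeGroup.of x * _ = _
    rw [FreeGroup.of, FreeGroup.mul_mk]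
    rfl

open scoped Classical in
theorem reduce_pos (l : List (X n)) :
    FreeGroup.reduce (l.map (fun x => (x, true))) = l.map (fun x => (x, true)) := by
  induction l with
  | nil => rfl
  | cons x l ih =>
    rw [List.map_cons, FreeGroup.reduce.cons, ih]
    cases hl : l.map (fun x => (x, true)) with
    | nil => rfl
    | cons y ys =>
      have hy : y.2 = true := by
        have : y ∈ l.map (fun x => (x, true)) := hl ▸ (List.mem_cons_self (a := y) (l := ys))
        obtain ⟨a, _, rfl⟩ := List.mem_map.mp this
        rfl
      simp [hy]

theorem eFG_injective : Function.Injective (eFG : FreeMonoid (X n) →* FreeGroup (X n)) := by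
  classical
  intro a b hab
  have ha := eFG_ofList (FreeMonoid.toList a)
  have hb := eFG_ofList (FreeMonoid.toList b)
  rw [show FreeMonoid.ofList (FreeMonoid.toList a) = a from rfl] at ha
  rw [show FreeMonoid.ofList (FreeMonoid.toList b) = b from rfl] at hb
  rw [ha, hb] at hab
  have h2 := congrArg FreeGroup.toWord hab
  rw [FreeGroup.toWord_mk, FreeGroup.toWord_mk, reduce_pos, reduce_pos] at h2
  have h3 : FreeMonoid.toList a = FreeMonoid.toList b := by
    have hinj : Function.Injective (fun x : X n => (x, true)) := by
      intro a b hab'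
      exact congrArg Prod.fst hab'
    exact List.map_injective_iff.mpr hinj h2
  exact h3

/-! ### Injectivity of `iotaM` -/

/-- Evaluation at a pair, as a monoid hom. -/
def evalW (p : X n × X n) : W n →* FreeGroup (X n) where
  toFun f := f p
  map_one' := rfl
  map_mul' _ _ := rfl

theorem iotaM_eval (p : X n × X n) (hp : Dp n p) (m : M n) :
    iotaM m p = eFG (φp p hp m) := by
  have : (evalW p).comp iotaM = eFG.comp (φp p hp) := by
    apply hom_ext_M
    intro x
    show iotaM (ofM x) p = eFG (φp p hp (ofM x))
    rw [iotaM_ofM, β_apply]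
    show _ = eFG (fp p x)
    by_cases hx : x = p.1 ∨ x = p.2
    · rw [if_pos ⟨hp, hx⟩, fp, if_pos (kp_iff.mpr hx)]
      rfl
    · rw [if_neg (fun hc => hx hc.2), fp, if_neg (by simpa using fun hc => hx (kp_iff.mp hc)),
        map_one]
  exact DFunLike.congr_fun this m

theorem iotaM_injective : Function.Injective (iotaM : M n →* W n) := by
  intro m m' hmm
  obtain ⟨a, rfl⟩ := PresentedMonoid.surjective_mk (rels := MRel n) m
  obtain ⟨b, rfl⟩ := PresentedMonoid.surjective_mk (rels := MRel n) m'
  have ha : PresentedMonoid.mk (MRel n) a = mkM (FreeMonoid.toList a) := rfl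
  have hb : PresentedMonoid.mk (MRel n) b = mkM (FreeMonoid.toList b) := rfl
  rw [ha, hb]
  apply proj_lemma
  intro p hp
  have h1 : iotaM (mkM (FreeMonoid.toList a)) p = iotaM (mkM (FreeMonoid.toList b)) p := by
    rw [← ha, ← hb, hmm]
  rw [iotaM_eval p hp, iotaM_eval p hp, φp_mkM, φp_mkM] at h1
  have h2 := eFG_injective h1
  exact congrArg FreeMonoid.toList h2

end BBEmb

/-- **Theorem 9.3.**  For every `n ≥ 2` the canonical monoid homomorphism `j : BB n → EB n`
from the tight bonded braid monoid to the enhanced bonded braid group, determined on generators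
by `j(σ_i) = σ_i`, `j(σ_i⁻) = σ_i⁻¹` and `j(b_i) = b_i`, is well defined and injective:
the bonded braid monoid embeds into a group. -/
theorem BB_embeds_into_EB (n : ℕ) (hn : 2 ≤ n) :
    ∃ j : BB n →* EB n,
      Function.Injective j ∧
      (∀ i : Fin (n-1), j (BB.sigma i) = EB.sigma i) ∧
      (∀ i : Fin (n-1), j (BB.sigmaInv i) = (EB.sigma i)⁻¹) ∧
      (∀ i : Fin (n-1), j (BB.bond i) = EB.bond i) := by
  classical
  refine ⟨BBEmb.jBB, ?_, fun i => rfl, fun i => rfl, fun i => rfl⟩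
  intro x y hxy
  have hsq : BBEmb.η (BBEmb.Θ x) = BBEmb.η (BBEmb.Θ y) := by
    have h1 : (BBEmb.ψ.comp BBEmb.jBB) x = (BBEmb.ψ.comp BBEmb.jBB) y := by
      simp only [MonoidHom.comp_apply, hxy]
    rwa [BBEmb.square, MonoidHom.comp_apply, MonoidHom.comp_apply] at h1
  have hL : BBEmb.iotaM (BBEmb.Θ x).1 = BBEmb.iotaM (BBEmb.Θ y).1 := by
    rw [← BBEmb.η_left, hsq, BBEmb.η_left]
  have hR : (BBEmb.Θ x).2 = (BBEmb.Θ y).2 := by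
    rw [← BBEmb.η_right, hsq, BBEmb.η_right]
  have hΘ : BBEmb.Θ x = BBEmb.Θ y := Prod.ext (BBEmb.iotaM_injective hL) hR
  rw [← BBEmb.Ξ_Θ x, hΘ, BBEmb.Ξ_Θ]
end
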